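/- There exists a probability density φ ∈ C^∞(ℝ²) ∩ L^∞(ℝ²) (smooth, bounded, nonnegative, integral 1) such that its marginal x ↦ ∫_ℝ φ(x,y) dy is unbounded. -/

import Mathlib

open MeasureTheory Real

noncomputable section

private def phi0 : ℝ × ℝ → ℝ := fun p => p.1 ^ 2 * Real.exp (-(p.1 ^ 2 + p.1 ^ 10 * p.2 ^ 4))

private lemma intF : Integrable (fun t : ℝ => Real.exp (-t ^ 4)) := by
  refine (((integrable_exp_neg_mul_sq (by norm_num : (0:ℝ) < 1)).const_mul
    (Real.exp (1/4))).mono' ?_ ?_)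
  · exact (Real.continuous_exp.comp (continuous_pow 4).neg).aestronglyMeasurable
  · filter_upwards with t
    rw [Real.norm_eq_abs, abs_of_nonneg (Real.exp_pos _).le, ← Real.exp_add]
    apply Real.exp_le_exp.2
    nlinarith [sq_nonneg (t^2 - 1/2)]

private lemma phi0_eq (x y : ℝ) :
    phi0 (x, y) = (x ^ 2 * Real.exp (-x ^ 2)) * Real.exp (-(|x| ^ ((5:ℝ)/2) * y) ^ 4) := by
  have hx : (|x| ^ ((5:ℝ)/2)) ^ (4:ℕ) = x ^ 10 := by
    rw [← Real.rpow_natCast (|x| ^ ((5:ℝ)/2)) 4, ← Real.rpow_mul (abs_nonneg x)]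
    norm_num
    rw [← abs_pow,
      abs_of_nonneg (by positivity : (0:ℝ) ≤ x ^ 10)]
  simp only [phi0, mul_pow, hx, neg_add, Real.exp_add, mul_assoc]

private lemma slice_int (x : ℝ) : Integrable (fun y => phi0 (x, y)) := by
  rcases eq_or_ne x 0 with rfl | hx
  · simp [phi0]
  · have ha : |x| ^ ((5:ℝ)/2) ≠ 0 := by positivity
    simp only [phi0_eq]
    exact (intF.comp_mul_left' ha).const_mul _

private lemma marginal_eq (x : ℝ) :
    ∫ y, phi0 (x, y) = (|x| ^ (-(1/2):ℝ) * Real.exp (-x ^ 2)) * ∫ t, Real.exp (-t ^ 4) := by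
  rcases eq_or_ne x 0 with rfl | hx
  · simp [phi0, Real.zero_rpow (by norm_num : (-(1/2):ℝ) ≠ 0)]
  · have hax : (0:ℝ) < |x| := abs_pos.2 hx
    have ha : (0:ℝ) < |x| ^ ((5:ℝ)/2) := by positivity
    simp only [phi0_eq]
    rw [integral_const_mul, MeasureTheory.Measure.integral_comp_mul_left
      (fun t => Real.exp (-t ^ 4)) (|x| ^ ((5:ℝ)/2))]
    rw [abs_of_nonneg (inv_nonneg.2 ha.le), smul_eq_mul, ← Real.rpow_neg hax.le]
    have key : x ^ 2 * |x| ^ (-((5:ℝ)/2)) = |x| ^ (-(1/2):ℝ) := by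
      rw [← sq_abs x, ← Real.rpow_natCast |x| 2, ← Real.rpow_add hax]
      norm_num
    linear_combination (Real.exp (-x ^ 2) * ∫ t, Real.exp (-t ^ 4)) * key

set_option maxHeartbeats 1000000 in
private lemma int_rpow_half : IntegrableOn (fun x : ℝ => |x| ^ (-(1/2):ℝ))
    (Set.Icc (-1:ℝ) 1) := by
  have hii : IntervalIntegrable (fun x : ℝ => x ^ (-(1/2):ℝ)) volume 0 1 :=
    intervalIntegral.intervalIntegrable_rpow' (by norm_num)
  have h1 : IntegrableOn (fun x : ℝ => |x| ^ (-(1/2):ℝ)) (Set.Ioc (0:ℝ) 1) := by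
    refine (hii.1.congr_fun ?_ measurableSet_Ioc)
    intro x hx
    show x ^ (-(1/2):ℝ) = |x| ^ (-(1/2):ℝ)
    rw [abs_of_pos hx.1]
  have hii2 : IntervalIntegrable (fun x : ℝ => (-x) ^ (-(1/2):ℝ)) volume 0 (-1) := by
    have h := (IntervalIntegrable.iff_comp_neg).mp hii
    rw [neg_zero] at h
    exact h
  have h2 : IntegrableOn (fun x : ℝ => |x| ^ (-(1/2):ℝ)) (Set.Ioc (-1:ℝ) 0) := by
    have := hii2.2
    refine (this.congr_fun ?_ measurableSet_Ioc)
    intro x hx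
    show (-x) ^ (-(1/2):ℝ) = |x| ^ (-(1/2):ℝ)
    rw [abs_of_nonpos hx.2]
  have : Set.Icc (-1:ℝ) 1 ⊆ Set.Ioc (-1:ℝ) 0 ∪ Set.Ioc (0:ℝ) 1 ∪ {-1} := by
    intro x hx
    rcases le_or_gt x 0 with h | h
    · rcases eq_or_lt_of_le hx.1 with h' | h'
      · exact Or.inr h'.symm
      · exact Or.inl (Or.inl ⟨h', h⟩)
    · exact Or.inl (Or.inr ⟨h, hx.2⟩)
  refine ((h2.union h1).union ?_).mono_set this
  exact (integrableOn_singleton_iff).mpr (Or.inr (by simp))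

private lemma meas_m : AEStronglyMeasurable
    (fun x : ℝ => |x| ^ (-(1/2):ℝ) * Real.exp (-x ^ 2)) volume := by
  apply Measurable.aestronglyMeasurable
  fun_prop

private lemma int_exp_sq : Integrable (fun x : ℝ => Real.exp (-x ^ 2)) := by
  have := integrable_exp_neg_mul_sq (by norm_num : (0:ℝ) < 1)
  simpa using this

private lemma int_m : Integrable (fun x : ℝ => |x| ^ (-(1/2):ℝ) * Real.exp (-x ^ 2)) := by
  rw [← integrableOn_univ]
  have hsub : (Set.univ : Set ℝ) ⊆ Set.Icc (-1:ℝ) 1 ∪ (Set.Icc (-1:ℝ) 1)ᶜ := by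
    simp
  refine (IntegrableOn.union ?_ ?_).mono_set hsub
  · refine int_rpow_half.mono' meas_m.restrict ?_
    filter_upwards with x
    rw [Real.norm_eq_abs, abs_of_nonneg (by positivity)]
    calc |x| ^ (-(1/2):ℝ) * Real.exp (-x ^ 2) ≤ |x| ^ (-(1/2):ℝ) * 1 := by
          gcongr
          exact Real.exp_le_one_iff.2 (neg_nonpos.2 (sq_nonneg x))
      _ = |x| ^ (-(1/2):ℝ) := mul_one _
  · refine int_exp_sq.integrableOn.mono' meas_m.restrict ?_
    rw [ae_restrict_iff' measurableSet_Icc.compl]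
    filter_upwards with x hx
    have h1 : (1:ℝ) ≤ |x| := by
      simp only [Set.mem_compl_iff, Set.mem_Icc, not_and_or, not_le] at hx
      rcases hx with h | h
      · rw [abs_of_neg (by linarith)]; linarith
      · rw [abs_of_pos (by linarith)]; linarith
    rw [Real.norm_eq_abs, abs_of_nonneg (by positivity)]
    calc |x| ^ (-(1/2):ℝ) * Real.exp (-x ^ 2) ≤ 1 * Real.exp (-x ^ 2) := by
          gcongr
          exact Real.rpow_le_one_of_one_le_of_nonpos h1 (by norm_num)
      _ = Real.exp (-x ^ 2) := one_mul _

private lemma phi0_nonneg (z : ℝ × ℝ) : 0 ≤ phi0 z := by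
  unfold phi0; positivity

private lemma cont_phi0 : Continuous phi0 := by
  unfold phi0; fun_prop

private lemma smooth_phi0 : ContDiff ℝ (⊤ : ℕ∞) phi0 :=
  (contDiff_fst.pow 2).mul
    (((contDiff_fst.pow 2).add ((contDiff_fst.pow 10).mul (contDiff_snd.pow 4))).neg.exp)

private lemma phi0_le_one (z : ℝ × ℝ) : phi0 z ≤ 1 := by
  obtain ⟨x, y⟩ := z
  show x ^ 2 * Real.exp (-(x ^ 2 + x ^ 10 * y ^ 4)) ≤ 1
  have h1 : x ^ 2 ≤ Real.exp (x ^ 2) := by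
    nlinarith [Real.add_one_le_exp (x ^ 2)]
  calc x ^ 2 * Real.exp (-(x ^ 2 + x ^ 10 * y ^ 4))
      ≤ Real.exp (x ^ 2) * Real.exp (-(x ^ 2 + x ^ 10 * y ^ 4)) := by
        gcongr
      _ = Real.exp (-(x ^ 10 * y ^ 4)) := by rw [← Real.exp_add]; ring_nf
      _ ≤ 1 := Real.exp_le_one_iff.2 (neg_nonpos.2 (by positivity))

private lemma int_phi0 : Integrable phi0 := by
  rw [← integrableOn_univ, IntegrableOn, MeasureTheory.Measure.volume_eq_prod,
    Measure.restrict_univ]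
  refine (integrable_prod_iff ?_).2 ⟨Filter.Eventually.of_forall slice_int, ?_⟩
  · exact cont_phi0.aestronglyMeasurable
  · have heq : (fun x : ℝ => ∫ y, ‖phi0 (x, y)‖) =
        fun x => (|x| ^ (-(1/2):ℝ) * Real.exp (-x ^ 2)) * ∫ t, Real.exp (-t ^ 4) := by
      funext x
      rw [← marginal_eq]
      congr 1
      funext y
      rw [Real.norm_eq_abs, abs_of_nonneg (phi0_nonneg _)]
    rw [heq]
    exact int_m.mul_const _

private lemma C_pos : 0 < ∫ t : ℝ, Real.exp (-t ^ 4) := by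
  rw [integral_pos_iff_support_of_nonneg (fun t => (Real.exp_pos _).le) intF]
  have : Function.support (fun t : ℝ => Real.exp (-t ^ 4)) = Set.univ := by
    ext t; simp [Function.support, (Real.exp_pos _).ne']
  simp [this]

private lemma I_pos : 0 < ∫ z, phi0 z := by
  rw [integral_pos_iff_support_of_nonneg phi0_nonneg int_phi0]
  have hopen : IsOpen (Function.support phi0) :=
    isOpen_compl_singleton.preimage cont_phi0
  refine hopen.measure_pos volume ⟨(1, 0), ?_⟩
  simp [Function.support, phi0, (Real.exp_pos _).ne']

/-- There exists a smooth, bounded, nonnegative probability density on `ℝ²`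
whose first marginal `x ↦ ∫ φ(x,y) dy` is unbounded. -/
theorem exists_smooth_bounded_density_unbounded_marginal :
    ∃ φ : ℝ × ℝ → ℝ,
      ContDiff ℝ (⊤ : ℕ∞) φ ∧
      (∀ z, 0 ≤ φ z) ∧
      (∃ M, ∀ z, φ z ≤ M) ∧
      Integrable φ ∧
      (∫ z, φ z = 1) ∧
      ¬ (∃ M, ∀ x : ℝ, (∫ y, φ (x, y)) ≤ M) := by
  set I : ℝ := ∫ z, phi0 z with hI
  have hIpos : 0 < I := I_pos
  set C : ℝ := ∫ t : ℝ, Real.exp (-t ^ 4) with hC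
  have hCpos : 0 < C := C_pos
  refine ⟨fun z => I⁻¹ * phi0 z, contDiff_const.mul smooth_phi0,
    fun z => mul_nonneg (inv_nonneg.2 hIpos.le) (phi0_nonneg z), ⟨I⁻¹, fun z => ?_⟩, int_phi0.const_mul _, ?_, ?_⟩
  · calc I⁻¹ * phi0 z ≤ I⁻¹ * 1 := by gcongr; exacts [phi0_le_one z]
      _ = I⁻¹ := mul_one _
  · rw [integral_const_mul, inv_mul_cancel₀ hIpos.ne']
  · rintro ⟨M, hM⟩
    set A : ℝ := I⁻¹ * Real.exp (-1) * C with hA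
    have hApos : 0 < A := by positivity
    set t : ℝ := max 1 (M / A + 1) with ht
    have ht1 : (1:ℝ) ≤ t := le_max_left _ _
    have htpos : (0:ℝ) < t := lt_of_lt_of_le one_pos ht1
    set x : ℝ := (t ^ 2)⁻¹ with hx
    have hxpos : 0 < x := by positivity
    have hx1 : x ≤ 1 := by
      rw [hx]
      rw [inv_le_one_iff₀]
      right; nlinarith
    have hrpow : |x| ^ (-(1/2):ℝ) = t := by
      rw [abs_of_pos hxpos, hx,
        show ((t ^ 2)⁻¹ : ℝ) = t ^ ((-2:ℝ)) by
          rw [show (-2:ℝ) = -((2:ℕ):ℝ) by norm_num, Real.rpow_neg htpos.le,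
            Real.rpow_natCast],
        ← Real.rpow_mul htpos.le]
      norm_num
    have hmarg : (∫ y, I⁻¹ * phi0 (x, y)) = I⁻¹ * ((t * Real.exp (-x ^ 2)) * C) := by
      rw [integral_const_mul, marginal_eq, hrpow]
    have hge : A * t ≤ ∫ y, I⁻¹ * phi0 (x, y) := by
      rw [hmarg, hA]
      have hexp : Real.exp (-1) ≤ Real.exp (-x ^ 2) := by
        apply Real.exp_le_exp.2
        nlinarith
      calc I⁻¹ * Real.exp (-1) * C * t = I⁻¹ * ((t * Real.exp (-1)) * C) := by ring
        _ ≤ I⁻¹ * ((t * Real.exp (-x ^ 2)) * C) := by gcongr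
    have hMt : A * t ≤ M := le_trans hge (hM x)
    have hcontra : M + A ≤ M := by
      calc M + A = A * (M / A + 1) := by field_simp
        _ ≤ A * t := by gcongr; exact le_max_right _ _
        _ ≤ M := hMt
    linarith
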